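/- Let (η, U) be a pair of random variables with U > 0, and suppose: (a) on the event {U ≥ u₀}, the conditional law of W := Uη given U = u satisfies P(W ≥ w | U = u) = L(w) w^{-α} for a slowly varying L and α ∈ (0,2); (b) E[U^{-α-ε}] < ∞ for some ε > 0 and E[U^p] < ∞; (c) P(U ≥ u₀) > 0. Then, conditioning on {U ≥ u₀}, E[U^p 1_{η > t} 1_{U ≥ u₀}] ∼ L(t) t^{-α} E[U^{p-α} 1_{U ≥ u₀}] as t → ∞. -/

import Mathlib

open Filter Topology MeasureTheory

/-- High-rate regime (equations (2.4)–(2.5) of the paper): if on `{U ≥ u₀}` the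
conditional law of `W = Uη` given `U = u` has tail `P(W ≥ w | U = u) = L(w) w^{-α}`
independent of `u` (expressed in integrated form), `U > 0`, `E[U^{-α-ε}] < ∞`,
`E[U^p] < ∞` and `P(U ≥ u₀) > 0`, then
`E[U^p 1_{η>t} 1_{U≥u₀}] ∼ L(t) t^{-α} E[U^{p-α} 1_{U≥u₀}]` as `t → ∞`. -/
theorem high_rate_regime {Ω : Type*} [MeasurableSpace Ω]
    (P : Measure Ω) [IsProbabilityMeasure P]
    (η U : Ω → ℝ) (hη : Measurable η) (hU : Measurable U)
    (hηpos : ∀ ω, 0 < η ω) (hUpos : ∀ ω, 0 < U ω)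
    (u₀ : ℝ) (hu₀ : 0 < u₀) (hPU : 0 < P {ω | u₀ ≤ U ω})
    (α : ℝ) (hα : 0 < α) (hα2 : α < 2)
    (L : ℝ → ℝ) (hLpos : ∀ x > 0, 0 < L x)
    (hsv : ∀ u > 0, Tendsto (fun t => L (u * t) / L t) atTop (𝓝 1))
    (hcond : ∀ w > (0:ℝ), ∀ φ : ℝ → ℝ, Measurable φ → (∀ x, 0 ≤ φ x) →
      (∫ ω in {ω | u₀ ≤ U ω ∧ w ≤ U ω * η ω}, φ (U ω) ∂P)
        = L w * w ^ (-α) * ∫ ω in {ω | u₀ ≤ U ω}, φ (U ω) ∂P)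
    (ε : ℝ) (hε : 0 < ε)
    (hmomneg : Integrable (fun ω => U ω ^ (-α - ε)) P)
    (p : ℕ) (hmomp : Integrable (fun ω => U ω ^ (p : ℝ)) P) :
    Tendsto (fun t =>
        (∫ ω in {ω | u₀ ≤ U ω ∧ t < η ω}, U ω ^ (p : ℝ) ∂P) /
          (L t * t ^ (-α) * ∫ ω in {ω | u₀ ≤ U ω}, U ω ^ ((p : ℝ) - α) ∂P))
      atTop (𝓝 1) := by
  classical
  set S : Set Ω := {ω | u₀ ≤ U ω} with hSdef
  have hSmeas : MeasurableSet S := measurableSet_le measurable_const hU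
  have hPS : 0 < (P S).toReal := ENNReal.toReal_pos hPU.ne' (measure_ne_top P S)
  set c : ℝ → ℝ := fun w => (P {ω | u₀ ≤ U ω ∧ w ≤ U ω * η ω}).toReal / (P S).toReal with hcdef
  have hc_eq : ∀ w > (0:ℝ), c w = L w * w ^ (-α) := by
    intro w hw
    have h := hcond w hw (fun _ => 1) measurable_const (fun _ => zero_le_one)
    simp only [setIntegral_const, smul_eq_mul, mul_one] at h
    simp only [hcdef]
    rw [measureReal_def, measureReal_def] at h
    rw [h]
    exact mul_div_cancel_right₀ _ hPS.ne'
  have hc_anti : Antitone c := by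
    intro w1 w2 h12
    simp only [hcdef]
    have hm : P {ω | u₀ ≤ U ω ∧ w2 ≤ U ω * η ω} ≤ P {ω | u₀ ≤ U ω ∧ w1 ≤ U ω * η ω} :=
      measure_mono (fun ω hω => ⟨hω.1, h12.trans hω.2⟩)
    exact div_le_div_of_nonneg_right (ENNReal.toReal_mono (measure_ne_top _ _) hm) hPS.le
  have hc_nonneg : ∀ w, 0 ≤ c w := fun w => div_nonneg ENNReal.toReal_nonneg ENNReal.toReal_nonneg
  have hc_le_one : ∀ w, c w ≤ 1 := by
    intro w
    simp only [hcdef]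
    rw [div_le_one hPS]
    exact ENNReal.toReal_mono (measure_ne_top _ _) (measure_mono (fun ω hω => hω.1))
  have hc_meas : Measurable c := hc_anti.measurable
  have hc_pos : ∀ w > (0:ℝ), 0 < c w := fun w hw => by
    rw [hc_eq w hw]; exact mul_pos (hLpos w hw) (Real.rpow_pos_of_pos hw _)
  -- basic facts about f = U^p
  have hf_meas : Measurable (fun ω => U ω ^ (p:ℝ)) := hU.pow_const _
  have hf_nonneg : ∀ ω, 0 ≤ U ω ^ (p:ℝ) := fun ω => Real.rpow_nonneg (hUpos ω).le _
  have habs : (fun x : ℝ => |x| ^ (p:ℝ)) ∘ U = fun ω => U ω ^ (p:ℝ) := by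
    funext ω; simp only [Function.comp_apply, abs_of_pos (hUpos ω)]
  have key : ∀ w > (0:ℝ), ∀ a b : ℝ, u₀ ≤ a →
      (∫ ω in U ⁻¹' Set.Ico a b ∩ {ω | w ≤ U ω * η ω}, U ω ^ (p:ℝ) ∂P)
        = c w * ∫ ω in U ⁻¹' Set.Ico a b, U ω ^ (p:ℝ) ∂P := by
    intro w hw a b hab
    have hφm : Measurable ((Set.Ico a b).indicator (fun x : ℝ => |x| ^ (p:ℝ))) :=
      (measurable_abs.pow_const _).indicator measurableSet_Ico
    have hφ0 : ∀ x, 0 ≤ (Set.Ico a b).indicator (fun x : ℝ => |x| ^ (p:ℝ)) x := fun x =>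
      Set.indicator_nonneg (fun y _ => Real.rpow_nonneg (abs_nonneg y) _) x
    have h := hcond w hw _ hφm hφ0
    have hrw : ∀ A : Set Ω, (∫ ω in A, (Set.Ico a b).indicator (fun x : ℝ => |x| ^ (p:ℝ)) (U ω) ∂P)
        = ∫ ω in A ∩ U ⁻¹' Set.Ico a b, U ω ^ (p:ℝ) ∂P := by
      intro A
      have heq : (fun ω => (Set.Ico a b).indicator (fun x : ℝ => |x| ^ (p:ℝ)) (U ω))
          = (U ⁻¹' Set.Ico a b).indicator (fun ω => U ω ^ (p:ℝ)) := by
        funext ω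
        rw [← Set.indicator_comp_right U (g := fun x : ℝ => |x| ^ (p:ℝ)), habs]
      rw [heq, setIntegral_indicator (hU measurableSet_Ico)]
    rw [hrw, hrw] at h
    rw [← hc_eq w hw] at h
    have e1 : {ω | u₀ ≤ U ω ∧ w ≤ U ω * η ω} ∩ U ⁻¹' Set.Ico a b
        = U ⁻¹' Set.Ico a b ∩ {ω | w ≤ U ω * η ω} := by
      ext ω; constructor
      · rintro ⟨⟨_, h2⟩, h3⟩; exact ⟨h3, h2⟩
      · rintro ⟨h3, h2⟩; exact ⟨⟨hab.trans h3.1, h2⟩, h3⟩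
    have e2 : S ∩ U ⁻¹' Set.Ico a b = U ⁻¹' Set.Ico a b := by
      ext ω; constructor
      · rintro ⟨_, h3⟩; exact h3
      · intro h3; exact ⟨hab.trans h3.1, h3⟩
    rw [e1, e2] at h
    exact h
  -- partition facts
  have hq1 : ∀ q : ℝ, 1 < q → ∀ k : ℕ, u₀ ≤ u₀ * q ^ k := fun q hq k =>
    le_mul_of_one_le_right hu₀.le (one_le_pow₀ hq.le)
  have hcover : ∀ q : ℝ, 1 < q → ∀ x : ℝ, u₀ ≤ x →
      ∃ k : ℕ, u₀ * q ^ k ≤ x ∧ x < u₀ * q ^ (k+1) := by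
    intro q hq x hx
    have hex : ∃ n : ℕ, x < u₀ * q ^ n := by
      obtain ⟨n, hn⟩ := pow_unbounded_of_one_lt (x / u₀) hq
      exact ⟨n, by rwa [div_lt_iff₀ hu₀, mul_comm] at hn⟩
    have hm : x < u₀ * q ^ (Nat.find hex) := Nat.find_spec hex
    have hm0 : Nat.find hex ≠ 0 := by
      intro h0
      rw [h0, pow_zero, mul_one] at hm
      exact absurd hx (not_le.2 hm)
    obtain ⟨k, hk⟩ := Nat.exists_eq_succ_of_ne_zero hm0
    rw [Nat.succ_eq_add_one] at hk
    refine ⟨k, ?_, by rw [← hk]; exact hm⟩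
    exact not_lt.1 (Nat.find_min hex (by omega))
  -- integrability of f * c(s U t)
  have hg_meas : ∀ s t : ℝ, Measurable (fun ω => U ω ^ (p:ℝ) * c (s * U ω * t)) := fun s t =>
    hf_meas.mul (hc_meas.comp ((hU.const_mul s).mul_const t))
  have hg_int : ∀ s t : ℝ, Integrable (fun ω => U ω ^ (p:ℝ) * c (s * U ω * t)) P := by
    intro s t
    refine hmomp.mono' (hg_meas s t).aestronglyMeasurable (ae_of_all _ fun ω => ?_)
    rw [Real.norm_eq_abs, abs_mul, abs_of_nonneg (hf_nonneg ω), abs_of_nonneg (hc_nonneg _)]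
    exact mul_le_of_le_one_right (hf_nonneg ω) (hc_le_one _)
  -- the sandwich
  have sandwich : ∀ q : ℝ, 1 < q → ∀ t : ℝ, 0 < t →
      (∫ ω in S, U ω ^ (p:ℝ) * c (q * U ω * t) ∂P)
          ≤ (∫ ω in {ω | u₀ ≤ U ω ∧ t < η ω}, U ω ^ (p:ℝ) ∂P)
      ∧ (∫ ω in {ω | u₀ ≤ U ω ∧ t < η ω}, U ω ^ (p:ℝ) ∂P)
          ≤ ∫ ω in S, U ω ^ (p:ℝ) * c (q⁻¹ * U ω * t) ∂P := by
    intro q hq t ht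
    have hq0 : (0:ℝ) < q := lt_trans one_pos hq
    have hTmeas : ∀ k : ℕ, MeasurableSet (U ⁻¹' Set.Ico (u₀ * q ^ k) (u₀ * q ^ (k+1))) :=
      fun k => hU measurableSet_Ico
    have hTdisj : Pairwise (Function.onFun Disjoint fun k : ℕ =>
        U ⁻¹' Set.Ico (u₀ * q ^ k) (u₀ * q ^ (k+1))) := by
      rw [pairwise_disjoint_on]
      intro i j hij
      refine Disjoint.preimage U ?_
      rw [Set.Ico_disjoint_Ico]
      have h1 : u₀ * q ^ (i+1) ≤ u₀ * q ^ j :=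
        mul_le_mul_of_nonneg_left (pow_le_pow_right₀ hq.le (by omega)) hu₀.le
      calc min (u₀ * q ^ (i+1)) (u₀ * q ^ (j+1)) ≤ u₀ * q ^ (i+1) := min_le_left _ _
        _ ≤ u₀ * q ^ j := h1
        _ ≤ max (u₀ * q ^ i) (u₀ * q ^ j) := le_max_right _ _
    have hTsub : ∀ k : ℕ, U ⁻¹' Set.Ico (u₀ * q ^ k) (u₀ * q ^ (k+1)) ⊆ S :=
      fun k ω hω => le_trans (hq1 q hq k) hω.1
    have hTunion : (⋃ k : ℕ, U ⁻¹' Set.Ico (u₀ * q ^ k) (u₀ * q ^ (k+1))) = S := by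
      ext ω
      constructor
      · intro hω
        obtain ⟨k, hk⟩ := Set.mem_iUnion.1 hω
        exact hTsub k hk
      · intro hω
        obtain ⟨k, h1, h2⟩ := hcover q hq (U ω) hω
        exact Set.mem_iUnion.2 ⟨k, h1, h2⟩
    have hη_meas : MeasurableSet {ω | t < η ω} := measurableSet_lt measurable_const hη
    have hXeq : {ω | u₀ ≤ U ω ∧ t < η ω}
        = ⋃ k : ℕ, (U ⁻¹' Set.Ico (u₀ * q ^ k) (u₀ * q ^ (k+1)) ∩ {ω | t < η ω}) := by
      rw [← Set.iUnion_inter, hTunion]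
      rfl
    have h1 : HasSum
        (fun k : ℕ => ∫ ω in U ⁻¹' Set.Ico (u₀ * q ^ k) (u₀ * q ^ (k+1)) ∩ {ω | t < η ω},
          U ω ^ (p:ℝ) ∂P)
        (∫ ω in {ω | u₀ ≤ U ω ∧ t < η ω}, U ω ^ (p:ℝ) ∂P) := by
      rw [hXeq]
      refine hasSum_integral_iUnion (fun k => (hTmeas k).inter hη_meas)
        (fun i j hij => ?_) hmomp.integrableOn
      exact Disjoint.mono Set.inter_subset_left Set.inter_subset_left (hTdisj hij)
    have h2 : ∀ s : ℝ, HasSum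
        (fun k : ℕ => ∫ ω in U ⁻¹' Set.Ico (u₀ * q ^ k) (u₀ * q ^ (k+1)),
          U ω ^ (p:ℝ) * c (s * U ω * t) ∂P)
        (∫ ω in S, U ω ^ (p:ℝ) * c (s * U ω * t) ∂P) := by
      intro s
      rw [← hTunion]
      exact hasSum_integral_iUnion hTmeas hTdisj (hg_int s t).integrableOn
    have hupper_k : ∀ k : ℕ,
        (∫ ω in U ⁻¹' Set.Ico (u₀ * q ^ k) (u₀ * q ^ (k+1)) ∩ {ω | t < η ω}, U ω ^ (p:ℝ) ∂P)
        ≤ ∫ ω in U ⁻¹' Set.Ico (u₀ * q ^ k) (u₀ * q ^ (k+1)),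
            U ω ^ (p:ℝ) * c (q⁻¹ * U ω * t) ∂P := by
      intro k
      have hwpos : (0:ℝ) < u₀ * q ^ k * t := by positivity
      have step1 : (∫ ω in U ⁻¹' Set.Ico (u₀ * q ^ k) (u₀ * q ^ (k+1)) ∩ {ω | t < η ω},
            U ω ^ (p:ℝ) ∂P)
          ≤ ∫ ω in U ⁻¹' Set.Ico (u₀ * q ^ k) (u₀ * q ^ (k+1)) ∩
              {ω | u₀ * q ^ k * t ≤ U ω * η ω}, U ω ^ (p:ℝ) ∂P := by
        refine setIntegral_mono_set hmomp.integrableOn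
          (ae_of_all _ fun ω => hf_nonneg ω) (ae_of_all _ ?_)
        rintro ω ⟨hω1, hω2⟩
        refine ⟨hω1, ?_⟩
        calc u₀ * q ^ k * t ≤ U ω * t := mul_le_mul_of_nonneg_right hω1.1 ht.le
          _ ≤ U ω * η ω := mul_le_mul_of_nonneg_left (le_of_lt hω2) (hUpos ω).le
      rw [key (u₀ * q ^ k * t) hwpos (u₀ * q ^ k) (u₀ * q ^ (k+1)) (hq1 q hq k)] at step1
      refine step1.trans ?_
      rw [← integral_const_mul]
      refine setIntegral_mono_on ((hmomp.const_mul _).integrableOn)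
        ((hg_int q⁻¹ t).integrableOn) (hTmeas k) ?_
      intro ω hω
      have harg : q⁻¹ * U ω * t ≤ u₀ * q ^ k * t := by
        refine mul_le_mul_of_nonneg_right ?_ ht.le
        rw [inv_mul_le_iff₀ hq0]
        calc U ω ≤ u₀ * q ^ (k+1) := le_of_lt hω.2
          _ = q * (u₀ * q ^ k) := by ring
      calc c (u₀ * q ^ k * t) * U ω ^ (p:ℝ)
          ≤ c (q⁻¹ * U ω * t) * U ω ^ (p:ℝ) :=
            mul_le_mul_of_nonneg_right (hc_anti harg) (hf_nonneg ω)
        _ = U ω ^ (p:ℝ) * c (q⁻¹ * U ω * t) := mul_comm _ _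
    have hlower_k : ∀ k : ℕ,
        (∫ ω in U ⁻¹' Set.Ico (u₀ * q ^ k) (u₀ * q ^ (k+1)),
            U ω ^ (p:ℝ) * c (q * U ω * t) ∂P)
        ≤ ∫ ω in U ⁻¹' Set.Ico (u₀ * q ^ k) (u₀ * q ^ (k+1)) ∩ {ω | t < η ω},
            U ω ^ (p:ℝ) ∂P := by
      intro k
      have hwpos : (0:ℝ) < u₀ * q ^ (k+1) * t := by positivity
      have step1 : (∫ ω in U ⁻¹' Set.Ico (u₀ * q ^ k) (u₀ * q ^ (k+1)),
            U ω ^ (p:ℝ) * c (q * U ω * t) ∂P)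
          ≤ c (u₀ * q ^ (k+1) * t) * ∫ ω in U ⁻¹' Set.Ico (u₀ * q ^ k) (u₀ * q ^ (k+1)),
              U ω ^ (p:ℝ) ∂P := by
        rw [← integral_const_mul]
        refine setIntegral_mono_on ((hg_int q t).integrableOn)
          ((hmomp.const_mul _).integrableOn) (hTmeas k) ?_
        intro ω hω
        have harg : u₀ * q ^ (k+1) * t ≤ q * U ω * t := by
          refine mul_le_mul_of_nonneg_right ?_ ht.le
          calc u₀ * q ^ (k+1) = q * (u₀ * q ^ k) := by ring
            _ ≤ q * U ω := mul_le_mul_of_nonneg_left hω.1 hq0.le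
        calc U ω ^ (p:ℝ) * c (q * U ω * t) = c (q * U ω * t) * U ω ^ (p:ℝ) := mul_comm _ _
          _ ≤ c (u₀ * q ^ (k+1) * t) * U ω ^ (p:ℝ) :=
            mul_le_mul_of_nonneg_right (hc_anti harg) (hf_nonneg ω)
      rw [← key (u₀ * q ^ (k+1) * t) hwpos (u₀ * q ^ k) (u₀ * q ^ (k+1)) (hq1 q hq k)] at step1
      refine step1.trans ?_
      refine setIntegral_mono_set hmomp.integrableOn
        (ae_of_all _ fun ω => hf_nonneg ω) (ae_of_all _ ?_)
      rintro ω ⟨hω1, hω2⟩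
      refine ⟨hω1, ?_⟩
      have h3 : U ω * t < U ω * η ω :=
        lt_of_lt_of_le (mul_lt_mul_of_pos_right hω1.2 ht) hω2
      exact lt_of_mul_lt_mul_left h3 (hUpos ω).le
    exact ⟨hasSum_le hlower_k (h2 q) h1, hasSum_le hupper_k h1 (h2 q⁻¹)⟩
  -- pointwise regular variation of c
  have hc_pt : ∀ u > (0:ℝ), Tendsto (fun t => c (u * t) / c t) atTop (𝓝 (u ^ (-α))) := by
    intro u hu
    have h1 : Tendsto (fun t => L (u * t) / L t * u ^ (-α)) atTop (𝓝 (1 * u ^ (-α))) :=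
      (hsv u hu).mul_const _
    rw [one_mul] at h1
    refine h1.congr' ?_
    filter_upwards [eventually_gt_atTop (0:ℝ)] with t ht
    rw [hc_eq t ht, hc_eq (u * t) (mul_pos hu ht), Real.mul_rpow hu.le ht.le]
    have hLt := (hLpos t ht).ne'
    have htα := (Real.rpow_pos_of_pos ht (-α)).ne'
    field_simp
  -- integrability and positivity of B
  have hB_int : IntegrableOn (fun ω => U ω ^ ((p:ℝ) - α)) S P := by
    refine Integrable.mono' ((hmomp.div_const (u₀ ^ α)).integrableOn)
      ((hU.pow_const _).aestronglyMeasurable) ?_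
    filter_upwards [ae_restrict_mem hSmeas] with ω hω
    rw [Real.norm_eq_abs, abs_of_nonneg (Real.rpow_nonneg (hUpos ω).le _),
      Real.rpow_sub (hUpos ω)]
    refine div_le_div_of_nonneg_left (hf_nonneg ω) (Real.rpow_pos_of_pos hu₀ α) ?_
    exact Real.rpow_le_rpow hu₀.le hω hα.le
  have hB_pos : 0 < ∫ ω in S, U ω ^ ((p:ℝ) - α) ∂P := by
    refine (setIntegral_pos_iff_support_of_nonneg_ae ?_ hB_int).2 ?_
    · exact ae_of_all _ fun ω => Real.rpow_nonneg (hUpos ω).le _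
    · have hsupp : Function.support (fun ω => U ω ^ ((p:ℝ) - α)) = Set.univ := by
        ext ω
        simp only [Function.mem_support, Set.mem_univ, iff_true]
        exact (Real.rpow_pos_of_pos (hUpos ω) _).ne'
      rw [hsupp, Set.univ_inter]
      exact hPU
  -- limit of G s t / c t via dominated convergence
  have hG : ∀ s > (0:ℝ),
      Tendsto (fun t => (∫ ω in S, U ω ^ (p:ℝ) * c (s * U ω * t) ∂P) / c t)
        atTop (𝓝 (s ^ (-α) * ∫ ω in S, U ω ^ ((p:ℝ) - α) ∂P)) := by
    intro s hs
    have hlim_eq : (∫ ω in S, U ω ^ (p:ℝ) * (s * U ω) ^ (-α) ∂P)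
        = s ^ (-α) * ∫ ω in S, U ω ^ ((p:ℝ) - α) ∂P := by
      rw [← integral_const_mul]
      refine setIntegral_congr_fun hSmeas fun ω _ => ?_
      rw [Real.mul_rpow hs.le (hUpos ω).le, Real.rpow_sub (hUpos ω),
        Real.rpow_neg (hUpos ω).le α]
      ring
    rw [← hlim_eq]
    have hDCT : Tendsto (fun t => ∫ ω in S, U ω ^ (p:ℝ) * (c (s * U ω * t) / c t) ∂P)
        atTop (𝓝 (∫ ω in S, U ω ^ (p:ℝ) * (s * U ω) ^ (-α) ∂P)) := by
      have haux : Tendsto (fun t => c (s * u₀ * t) / c t) atTop (𝓝 ((s * u₀) ^ (-α))) :=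
        hc_pt (s * u₀) (mul_pos hs hu₀)
      refine tendsto_integral_filter_of_dominated_convergence
        (bound := fun ω => U ω ^ (p:ℝ) * ((s * u₀) ^ (-α) + 1)) ?_ ?_ ?_ ?_
      · refine Eventually.of_forall fun t => ?_
        exact (hf_meas.mul ((hc_meas.comp ((hU.const_mul s).mul_const t)).div_const _)).aestronglyMeasurable
      · filter_upwards [haux.eventually_lt_const (lt_add_one _), eventually_gt_atTop (0:ℝ)]
          with t hratio ht
        filter_upwards [ae_restrict_mem hSmeas] with ω hω
        have hct : 0 < c t := hc_pos t ht
        have harg : s * u₀ * t ≤ s * U ω * t :=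
          mul_le_mul_of_nonneg_right (mul_le_mul_of_nonneg_left hω hs.le) ht.le
        have h2 : 0 ≤ c (s * U ω * t) / c t := div_nonneg (hc_nonneg _) hct.le
        rw [Real.norm_eq_abs, abs_mul, abs_of_nonneg (hf_nonneg ω), abs_of_nonneg h2]
        refine mul_le_mul_of_nonneg_left ?_ (hf_nonneg ω)
        calc c (s * U ω * t) / c t ≤ c (s * u₀ * t) / c t :=
              div_le_div_of_nonneg_right (hc_anti harg) hct.le
          _ ≤ (s * u₀) ^ (-α) + 1 := hratio.le
      · exact (hmomp.mul_const _).integrableOn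
      · filter_upwards [ae_restrict_mem hSmeas] with ω hω
        exact (hc_pt (s * U ω) (mul_pos hs (hUpos ω))).const_mul _
    refine hDCT.congr fun t => ?_
    rw [← integral_div]
    exact setIntegral_congr_fun hSmeas fun ω _ => (mul_div_assoc _ _ _).symm
  -- final squeeze
  have hfinal : Tendsto (fun t =>
      (∫ ω in {ω | u₀ ≤ U ω ∧ t < η ω}, U ω ^ (p:ℝ) ∂P) /
        (c t * ∫ ω in S, U ω ^ ((p:ℝ) - α) ∂P)) atTop (𝓝 1) := by
    rw [Metric.tendsto_nhds]
    intro ε' hε'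
    obtain ⟨q, hq, hqa, hqb⟩ : ∃ q : ℝ, 1 < q ∧ q ^ α < 1 + ε' ∧ 1 - ε' < q ^ (-α) := by
      have hca : ContinuousAt (fun q : ℝ => q ^ α) 1 :=
        Real.continuousAt_rpow_const 1 α (Or.inl one_ne_zero)
      have hcb : ContinuousAt (fun q : ℝ => q ^ (-α)) 1 :=
        Real.continuousAt_rpow_const 1 (-α) (Or.inl one_ne_zero)
      have ha' : Tendsto (fun q : ℝ => q ^ α) (𝓝 1) (𝓝 1) := by
        have := hca.tendsto
        simpa [Real.one_rpow] using this
      have hb' : Tendsto (fun q : ℝ => q ^ (-α)) (𝓝 1) (𝓝 1) := by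
        have := hcb.tendsto
        simpa [Real.one_rpow] using this
      have h1 : ∀ᶠ q in 𝓝 (1:ℝ), q ^ α < 1 + ε' := ha'.eventually_lt_const (by linarith)
      have h2 : ∀ᶠ q in 𝓝 (1:ℝ), 1 - ε' < q ^ (-α) := hb'.eventually_const_lt (by linarith)
      have h3 : ∀ᶠ q in 𝓝[>] (1:ℝ), 1 < q := self_mem_nhdsWithin
      obtain ⟨q, ⟨hq1, hq2⟩, hq3⟩ :=
        (((h1.and h2).filter_mono nhdsWithin_le_nhds).and h3).exists
      exact ⟨q, hq3, hq1, hq2⟩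
    have hq0 : (0:ℝ) < q := lt_trans one_pos hq
    have hqinv : (q⁻¹ : ℝ) ^ (-α) = q ^ α := by
      rw [Real.inv_rpow hq0.le, Real.rpow_neg hq0.le, inv_inv]
    have hlimlo : Tendsto (fun t =>
        (∫ ω in S, U ω ^ (p:ℝ) * c (q * U ω * t) ∂P) /
          (c t * ∫ ω in S, U ω ^ ((p:ℝ) - α) ∂P)) atTop (𝓝 (q ^ (-α))) := by
      have h := (hG q hq0).div_const (∫ ω in S, U ω ^ ((p:ℝ) - α) ∂P)
      rw [mul_div_cancel_right₀ _ hB_pos.ne'] at h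
      refine h.congr fun t => ?_
      rw [div_div]
    have hlimhi : Tendsto (fun t =>
        (∫ ω in S, U ω ^ (p:ℝ) * c (q⁻¹ * U ω * t) ∂P) /
          (c t * ∫ ω in S, U ω ^ ((p:ℝ) - α) ∂P)) atTop (𝓝 (q ^ α)) := by
      have h := (hG q⁻¹ (inv_pos.2 hq0)).div_const (∫ ω in S, U ω ^ ((p:ℝ) - α) ∂P)
      rw [mul_div_cancel_right₀ _ hB_pos.ne', hqinv] at h
      refine h.congr fun t => ?_
      rw [div_div]
    filter_upwards [hlimlo.eventually_const_lt hqb, hlimhi.eventually_lt_const hqa,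
      eventually_gt_atTop (0:ℝ)] with t hlo hhi ht
    have hDpos : 0 < c t * ∫ ω in S, U ω ^ ((p:ℝ) - α) ∂P := mul_pos (hc_pos t ht) hB_pos
    have hsand := sandwich q hq t ht
    have hA1 := div_le_div_of_nonneg_right hsand.2 hDpos.le
    have hA2 := div_le_div_of_nonneg_right hsand.1 hDpos.le
    rw [Real.dist_eq, abs_sub_lt_iff]
    constructor
    · linarith [hA1.trans_lt hhi]
    · linarith [hlo.trans_le hA2]
  refine Tendsto.congr' ?_ hfinal
  filter_upwards [eventually_gt_atTop (0:ℝ)] with t ht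
  rw [hc_eq t ht]
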